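/- Let A = (Q, Σ, δ, ρ) be an invertible-reversible Mealy automaton. If there exist n ≥ 0 and u ∈ Q^n such that all the words u z, z ∈ Q, lie in one single orbit of Q^{n+1} (i.e., the connected component of u in A^n does not split up), then the action of the group generated by {δ_i : i ∈ Σ} on Q^{n+1} is transitive; hence the connection degree of A is at least n+1. -/
import Mathlib


namespace MealyFormal

variable {Q X : Type*}

/-- Extended transition function of the dual automaton: the action of a letter
`i ∈ Σ` on words over the stateset `Q`, defined by
`δ_i(ε) = ε` and `δ_i(x w) = δ_i(x) δ_{ρ_x(i)}(w)`. -/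
def dExt (δ : X → Q → Q) (ρ : Q → X → X) : X → List Q → List Q
  | _, [] => []
  | i, x :: w => δ i x :: dExt δ ρ (ρ x i) w

/-- The action `δ_s = δ_{s_n} ∘ ⋯ ∘ δ_{s_1}` of a word `s` over `Σ` on words over `Q`. -/
def dWord (δ : X → Q → Q) (ρ : Q → X → X) : List X → List Q → List Q
  | [], u => u
  | i :: s, u => dWord δ ρ s (dExt δ ρ i u)

/-- Extended production function: the action of a state `x ∈ Q` on words over the
alphabet `Σ`, defined by `ρ_x(ε) = ε` and `ρ_x(i s) = ρ_x(i) ρ_{δ_i(x)}(s)`. -/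
def rExt (δ : X → Q → Q) (ρ : Q → X → X) : Q → List X → List X
  | _, [] => []
  | x, i :: s => ρ x i :: rExt δ ρ (δ i x) s

/-- The action `ρ_u = ρ_{x_n} ∘ ⋯ ∘ ρ_{x_1}` of a word `u = x_1⋯x_n` over `Q`
on words over `Σ`. -/
def rWord (δ : X → Q → Q) (ρ : Q → X → X) : List Q → List X → List X
  | [], s => s
  | x :: u, s => rWord δ ρ u (rExt δ ρ x s)

/-- `v` lies in the orbit of `u` under the action of the dual automaton. -/
def InOrbit (δ : X → Q → Q) (ρ : Q → X → X) (u v : List Q) : Prop :=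
  ∃ s : List X, dWord δ ρ s u = v

/-- The orbit (connected component of the corresponding power) of a word over `Q`. -/
def orbit (δ : X → Q → Q) (ρ : Q → X → X) (u : List Q) : Set (List Q) :=
  {v | InOrbit δ ρ u v}

/-- The action of the dual automaton on `Q^n` is transitive, i.e. `A^n` is connected. -/
def LevelTransitive (δ : X → Q → Q) (ρ : Q → X → X) (n : ℕ) : Prop :=
  ∀ u v : List Q, u.length = n → v.length = n → InOrbit δ ρ u v

/-- The label `ℓ(u x)` of the nonempty word `u x`:
the number of `z ∈ Q` with `u z` in the orbit of `u x`. -/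
noncomputable def label (δ : X → Q → Q) (ρ : Q → X → X) (u : List Q) (x : Q) : ℕ :=
  Set.ncard {z : Q | InOrbit δ ρ (u ++ [x]) (u ++ [z])}

/-- Prefix of length `i` of the (infinite) word `w = w_1 w_2 ⋯`. -/
def pref (w : ℕ → Q) (i : ℕ) : List Q := (List.range i).map w

/-- The `n`-th power `u^n` of a word `u`. -/
def wpow (u : List Q) (n : ℕ) : List Q := (List.replicate n u).flatten

/-- The group generated by the Mealy automaton: the subgroup of permutations of `Σ*`
generated by the production functions `ρ_x`, `x ∈ Q`. -/
def autGroup (δ : X → Q → Q) (ρ : Q → X → X) : Subgroup (Equiv.Perm (List X)) :=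
  Subgroup.closure {π : Equiv.Perm (List X) | ∃ q : Q, ⇑π = rExt δ ρ q}

/-- The semigroup of maps `Σ* → Σ*` generated under composition by the `ρ_x`, `x ∈ Q`. -/
def prodSemigroup (δ : X → Q → Q) (ρ : Q → X → X) :
    Subsemigroup (Function.End (List X)) :=
  Subsemigroup.closure {f : Function.End (List X) | ∃ q : Q, f = rExt δ ρ q}

/-- The semigroup of maps `Q* → Q*` generated under composition by the `δ_i`, `i ∈ Σ`. -/
def dualSemigroup (δ : X → Q → Q) (ρ : Q → X → X) :
    Subsemigroup (Function.End (List Q)) :=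
  Subsemigroup.closure {f : Function.End (List Q) | ∃ i : X, f = dExt δ ρ i}

/-- A word `w` over `Q` is orbital if all its factors of length `c+1`
belong to the reduction orbit `O2`. -/
def Orbital (c : ℕ) (O2 : Set (List Q)) (w : List Q) : Prop :=
  ∀ f : List Q, f.length = c + 1 → f <:+: w → f ∈ O2

/-- A word is cyclically orbital if each of its powers is orbital. -/
def CycOrbital (c : ℕ) (O2 : Set (List Q)) (w : List Q) : Prop :=
  ∀ n : ℕ, Orbital c O2 (wpow w n)

/-- The standing setup: `A` is a connected invertible-reversible Mealy automaton
with 3 states, `0 < c = cd(A) < ∞`, and `Q^{c+1}` splits into exactly two orbits,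
of sizes `2·3^c` and `3^c`; `O2` is the reduction orbit, of size `2·3^c`. -/
structure StandingSetup (δ : X → Q → Q) (ρ : Q → X → X) (c : ℕ) (O2 : Set (List Q)) :
    Prop where
  card_three : Nat.card Q = 3
  invertible : ∀ q : Q, Function.Bijective (ρ q)
  reversible : ∀ i : X, Function.Bijective (δ i)
  connected : LevelTransitive δ ρ 1
  c_pos : 0 < c
  trans_c : LevelTransitive δ ρ c
  not_trans_succ : ¬ LevelTransitive δ ρ (c + 1)
  O2_is_orbit : ∃ w : List Q, w.length = c + 1 ∧ O2 = orbit δ ρ w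
  O2_card : O2.ncard = 2 * 3 ^ c
  other_is_orbit : ∃ w : List Q, w.length = c + 1 ∧
    orbit δ ρ w = {v : List Q | v.length = c + 1} \ O2
  other_card : ({v : List Q | v.length = c + 1} \ O2).ncard = 3 ^ c

section Aux

variable (δ : X → Q → Q) (ρ : Q → X → X)

/-- The state reached from `x` after reading the input word `s`. -/
def act1 : List X → Q → Q
  | [], x => x
  | i :: s, x => act1 s (δ i x)

@[simp] lemma dExt_nil (i : X) : dExt δ ρ i ([] : List Q) = [] := rfl

@[simp] lemma dWord_nil : ∀ s : List X, dWord δ ρ s ([] : List Q) = []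
  | [] => rfl
  | _ :: s => by rw [dWord, dExt_nil, dWord_nil]

@[simp] lemma dExt_length (i : X) : ∀ w : List Q, (dExt δ ρ i w).length = w.length
  | [] => rfl
  | x :: w => by rw [dExt]; simp [dExt_length]

@[simp] lemma dWord_length : ∀ (s : List X) (w : List Q),
    (dWord δ ρ s w).length = w.length
  | [], w => rfl
  | i :: s, w => by rw [dWord, dWord_length, dExt_length]

lemma dWord_cons : ∀ (s : List X) (x : Q) (w : List Q),
    dWord δ ρ s (x :: w) = act1 δ s x :: dWord δ ρ (rExt δ ρ x s) w
  | [], x, w => rfl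
  | i :: s, x, w => by
      rw [dWord, dExt, dWord_cons, rExt, dWord, act1]

lemma dWord_append' : ∀ (u : List Q) (s : List X) (v : List Q),
    dWord δ ρ s (u ++ v) = dWord δ ρ s u ++ dWord δ ρ (rWord δ ρ u s) v
  | [], s, v => by simp [rWord]
  | x :: u, s, v => by
      rw [List.cons_append, dWord_cons, dWord_cons, dWord_append', rWord,
        List.cons_append]

lemma dWord_comp (s t : List X) (w : List Q) :
    dWord δ ρ (s ++ t) w = dWord δ ρ t (dWord δ ρ s w) := by
  induction s generalizing w with
  | nil => rfl
  | cons i s ih => rw [List.cons_append, dWord, dWord, ih]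

lemma dExt_injective (hrev : ∀ i : X, Function.Bijective (δ i)) (i : X) :
    Function.Injective (dExt δ ρ i) := by
  suffices h : ∀ (w w' : List Q) (i : X), dExt δ ρ i w = dExt δ ρ i w' → w = w' from
    fun w w' => h w w' i
  intro w
  induction w with
  | nil => intro w' i h; cases w' <;> simp_all [dExt]
  | cons x w ih =>
      intro w' i h
      cases w' with
      | nil => simp_all [dExt]
      | cons y w' =>
          rw [dExt, dExt, List.cons.injEq] at h
          obtain ⟨h1, h2⟩ := h
          have hx : x = y := (hrev i).1 h1
          subst hx
          exact congrArg _ (ih _ _ h2)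

lemma dWord_injective (hrev : ∀ i : X, Function.Bijective (δ i)) (s : List X) :
    Function.Injective (dWord δ ρ s) := by
  induction s with
  | nil => exact fun a b h => h
  | cons i s ih => exact fun a b h => dExt_injective δ ρ hrev i (ih h)

/-- On words of a fixed length (over a finite stateset), the orbit relation is
symmetric: every `dWord s` can be undone. -/
lemma dWord_symm [Finite Q] (hrev : ∀ i : X, Function.Bijective (δ i))
    (s : List X) (w : List Q) :
    ∃ s' : List X, dWord δ ρ s' (dWord δ ρ s w) = w := by
  -- iterate dWord s; pigeonhole
  have hiter : ∀ (k : ℕ) (v : List Q), dWord δ ρ ((List.replicate k s).flatten) v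
      = (dWord δ ρ s)^[k] v := by
    intro k
    induction k with
    | zero => intro v; rfl
    | succ k ih =>
        intro v
        rw [List.replicate_succ, List.flatten_cons, dWord_comp, ih,
          Function.iterate_succ_apply]
  have hfin : {l : List Q | l.length = w.length}.Finite := List.finite_length_eq Q w.length
  have hmem : ∀ k : ℕ, (dWord δ ρ s)^[k] w ∈ {l : List Q | l.length = w.length} := by
    intro k
    induction k with
    | zero => simp
    | succ k ih => rw [Function.iterate_succ_apply']; simpa using ih
  have : ¬ Function.Injective (fun k : ℕ => (⟨(dWord δ ρ s)^[k] w, hmem k⟩ :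
      {l : List Q | l.length = w.length})) := by
    intro hinj
    exact Set.not_infinite.2 hfin
      (Set.infinite_coe_iff.1 (Infinite.of_injective _ hinj))
  rw [Function.not_injective_iff] at this
  obtain ⟨a, b, hab, hne⟩ := this
  simp only [Subtype.mk.injEq] at hab
  wlog h : a < b generalizing a b
  · exact this b a hne.symm hab.symm (by omega)
  -- cancel a iterations
  have hinj : Function.Injective ((dWord δ ρ s)^[a]) :=
    Function.Injective.iterate (dWord_injective δ ρ hrev s) a
  have hba : (dWord δ ρ s)^[b - a] w = w := by
    apply hinj
    rw [← Function.iterate_add_apply]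
    have : a + (b - a) = b := by omega
    rw [this, hab]
  refine ⟨(List.replicate (b - a - 1) s).flatten, ?_⟩
  rw [hiter (b - a - 1) (dWord δ ρ s w), ← Function.iterate_succ_apply]
  have : (b - a - 1).succ = b - a := by omega
  rw [this, hba]

lemma inorbit_trans {a b c : List Q} (h1 : InOrbit δ ρ a b) (h2 : InOrbit δ ρ b c) :
    InOrbit δ ρ a c := by
  obtain ⟨s, hs⟩ := h1; obtain ⟨t, ht⟩ := h2
  exact ⟨s ++ t, by rw [dWord_comp, hs, ht]⟩

lemma inorbit_symm [Finite Q] (hrev : ∀ i : X, Function.Bijective (δ i))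
    {a b : List Q} (h : InOrbit δ ρ a b) :
    InOrbit δ ρ b a := by
  obtain ⟨s, hs⟩ := h
  obtain ⟨s', hs'⟩ := dWord_symm δ ρ hrev s a
  exact ⟨s', by rw [hs] at hs'; exact hs'⟩

end Aux

/-- If the connected component of some `u ∈ Q^n` does not split up
(all words `u ++ [z]`, `z ∈ Q`, lie in a single orbit of `Q^{n+1}`), then the
action on `Q^{n+1}` is transitive; hence the connection degree of `A`
is at least `n + 1`. -/
theorem no_split_implies_transitive
    {Q X : Type*} [Finite Q] [Finite X] [Nonempty Q] [Nonempty X]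
    (δ : X → Q → Q) (ρ : Q → X → X)
    (hinv : ∀ q : Q, Function.Bijective (ρ q))
    (hrev : ∀ i : X, Function.Bijective (δ i))
    (u : List Q)
    (hnosplit : ∀ z z' : Q, InOrbit δ ρ (u ++ [z]) (u ++ [z'])) :
    LevelTransitive δ ρ (u.length + 1) := by
  induction u with
  | nil =>
      intro a b ha hb
      match a, ha, b, hb with
      | [za], _, [zb], _ => exact hnosplit za zb
  | cons x u₁ ih =>
      -- no-split descends to u₁
      have hns₁ : ∀ z z' : Q, InOrbit δ ρ (u₁ ++ [z]) (u₁ ++ [z']) := by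
        intro z z'
        obtain ⟨s, hs⟩ := hnosplit z z'
        rw [List.cons_append, List.cons_append, dWord_cons, List.cons.injEq] at hs
        exact ⟨rExt δ ρ x s, hs.2⟩
      have htrans : LevelTransitive δ ρ (u₁.length + 1) := ih hns₁
      intro a b ha hb
      -- peel the last letters of a and b
      have hane : a ≠ [] := by intro h; simp [h] at ha
      have hbne : b ≠ [] := by intro h; simp [h] at hb
      obtain ⟨a₀, za, rfl⟩ : ∃ a₀ za, a = a₀ ++ [za] :=
        ⟨a.dropLast, a.getLast hane, (a.dropLast_append_getLast hane).symm⟩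
      obtain ⟨b₀, zb, rfl⟩ : ∃ b₀ zb, b = b₀ ++ [zb] :=
        ⟨b.dropLast, b.getLast hbne, (b.dropLast_append_getLast hbne).symm⟩
      simp only [List.length_append, List.length_cons, List.length_nil] at ha hb
      have ha₀ : a₀.length = u₁.length + 1 := by omega
      have hb₀ : b₀.length = u₁.length + 1 := by omega
      set u : List Q := x :: u₁ with hu
      have hu_len : u.length = u₁.length + 1 := rfl
      -- every word c₀ ++ [zc] is in the orbit of u ++ [zc'] for some zc'
      have step : ∀ (c₀ : List Q) (zc : Q), c₀.length = u₁.length + 1 →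
          ∃ zc', InOrbit δ ρ (c₀ ++ [zc]) (u ++ [zc']) := by
        intro c₀ zc hc₀
        obtain ⟨t, ht⟩ := htrans c₀ u hc₀ hu_len
        refine ⟨act1 δ (rWord δ ρ c₀ t) zc, ⟨t, ?_⟩⟩
        rw [dWord_append', ht, dWord_cons, dWord_nil]
      obtain ⟨za', hA⟩ := step a₀ za ha₀
      obtain ⟨zb', hB⟩ := step b₀ zb hb₀
      exact inorbit_trans δ ρ hA (inorbit_trans δ ρ (hnosplit za' zb')
        (inorbit_symm δ ρ hrev hB))

end MealyFormal
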